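/- All Thompson groups V_r are isomorphic (equation (2to1_V)): if r ≥ 1 and s ≥ 1, if C is a Cantor algebra free on r generators and D is a Cantor algebra free on s generators, then the automorphism groups Aut(C) and Aut(D) are isomorphic as groups (there exists a group isomorphism, i.e. a MulEquiv, Aut(C) ≃* Aut(D)). -/

import Mathlib

open CategoryTheory


/-- A Cantor algebra: a type with a bijection `μ : X × X ≃ X`. -/
structure CantorStr (X : Type) where
  mu : X × X ≃ X

/-- A homomorphism of Cantor algebras: a map commuting with the multiplications. -/
def IsCantorHom {C X : Type} (hC : CantorStr C) (hX : CantorStr X) (f : C → X) : Prop :=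
  ∀ x y : C, f (hC.mu (x, y)) = hX.mu (f x, f y)

/-- `C` is the free Cantor algebra on the generators `b : Fin r → C`. -/
def IsFreeCantorOn {C : Type} (hC : CantorStr C) {r : ℕ} (b : Fin r → C) : Prop :=
  ∀ (X : Type) (hX : CantorStr X) (x : Fin r → X),
    ∃! f : C → X, IsCantorHom hC hX f ∧ ∀ i, f (b i) = x i

/-- The automorphism group of a Cantor algebra, as a subgroup of the permutation group. -/
def cantorAut {C : Type} (hC : CantorStr C) : Subgroup (Equiv.Perm C) where
  carrier := {f : Equiv.Perm C | IsCantorHom hC hC f}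
  one_mem' := fun _ _ => rfl
  mul_mem' := by
    intro a b ha hb x y
    simp only [Equiv.Perm.coe_mul, Function.comp_apply, hb x y, ha (b x) (b y)]
  inv_mem' := by
    intro a ha x y
    apply a.injective
    have h : ∀ z, a (a⁻¹ z) = z := fun z => a.apply_symm_apply z
    rw [h, ha, h, h]


/-!
Splitting a generator `b₀` of a free Cantor algebra into its halves `λ b₀, ρ b₀` gives a
free basis with one more element, so a Cantor algebra free of rank `r ≥ 1` is free of every
rank `≥ r`. Hence free Cantor algebras of ranks `r, s ≥ 1` are both free of rank `max r s`,
hence isomorphic, and conjugating by an isomorphism identifies their automorphism groups.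
-/

section CantorHom

variable {X Y Z : Type} {hX : CantorStr X} {hY : CantorStr Y} {hZ : CantorStr Z}

theorem IsCantorHom.id : IsCantorHom hX hX id := fun _ _ => rfl

theorem IsCantorHom.comp {g : Y → Z} {f : X → Y} (hg : IsCantorHom hY hZ g)
    (hf : IsCantorHom hX hY f) : IsCantorHom hX hZ (g ∘ f) := fun x y => by
  simp only [Function.comp_apply, hf x y, hg (f x) (f y)]

theorem IsCantorHom.symm {e : X ≃ Y} (he : IsCantorHom hX hY e) : IsCantorHom hY hX e.symm :=
  fun x y => e.injective <| by
    rw [he, Equiv.apply_symm_apply, Equiv.apply_symm_apply, Equiv.apply_symm_apply]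

theorem IsCantorHom.apply_eq_mu {f : X → Y} (hf : IsCantorHom hX hY f) (x : X) :
    f x = hY.mu (f (hX.mu.symm x).1, f (hX.mu.symm x).2) := by
  rw [← hf, Prod.mk.eta, Equiv.apply_symm_apply]

end CantorHom

section Aut

variable {C D : Type} {hC : CantorStr C} {hD : CantorStr D}

theorem IsCantorHom.permCongr_mem_cantorAut {e : C ≃ D} (he : IsCantorHom hC hD e)
    {a : Equiv.Perm C} (ha : a ∈ cantorAut hC) : e.permCongr a ∈ cantorAut hD :=
  show IsCantorHom hD hD (e ∘ a ∘ e.symm) from he.comp (IsCantorHom.comp ha he.symm)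

theorem IsCantorHom.map_cantorAut {e : C ≃ D} (he : IsCantorHom hC hD e) :
    (cantorAut hC).map e.permCongrHom.toMonoidHom = cantorAut hD := by
  ext a
  rw [Subgroup.mem_map_equiv]
  constructor
  · intro ha
    simpa [← Equiv.permCongr_symm] using he.permCongr_mem_cantorAut ha
  · exact he.symm.permCongr_mem_cantorAut

def IsCantorHom.cantorAutCongr {e : C ≃ D} (he : IsCantorHom hC hD e) :
    cantorAut hC ≃* cantorAut hD :=
  (e.permCongrHom.subgroupMap (cantorAut hC)).trans (MulEquiv.subgroupCongr he.map_cantorAut)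

end Aut

section Free

variable {C : Type} {hC : CantorStr C}

theorem IsFreeCantorOn.hom_ext {r : ℕ} {b : Fin r → C} (hb : IsFreeCantorOn hC b) {X : Type}
    {hX : CantorStr X} {f g : C → X} (hf : IsCantorHom hC hX f) (hg : IsCantorHom hC hX g)
    (hfg : ∀ i, f (b i) = g (b i)) : f = g :=
  (hb X hX fun i => g (b i)).unique ⟨hf, hfg⟩ ⟨hg, fun _ => rfl⟩

theorem IsFreeCantorOn.exists_cantorEquiv {D : Type} {hD : CantorStr D} {r : ℕ} {b : Fin r → C}
    {b' : Fin r → D} (hb : IsFreeCantorOn hC b) (hb' : IsFreeCantorOn hD b') :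
    ∃ e : C ≃ D, IsCantorHom hC hD e := by
  obtain ⟨f, ⟨hf, hfb⟩, -⟩ := hb D hD b'
  obtain ⟨g, ⟨hg, hgb⟩, -⟩ := hb' C hC b
  have hgf : g ∘ f = id := hb.hom_ext (hg.comp hf) IsCantorHom.id fun i => by simp [hfb, hgb]
  have hfg : f ∘ g = id := hb'.hom_ext (hf.comp hg) IsCantorHom.id fun i => by simp [hfb, hgb]
  exact ⟨⟨f, g, congrFun hgf, congrFun hfg⟩, hf⟩

/-- Replace the first generator `b 0` by its two halves `λ (b 0), ρ (b 0)`. -/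
def splitHead (hC : CantorStr C) {n : ℕ} (b : Fin (n + 1) → C) : Fin (n + 2) → C :=
  Fin.cons (hC.mu.symm (b 0)).1 (Fin.cons (hC.mu.symm (b 0)).2 (Fin.tail b))

theorem IsFreeCantorOn.splitHead {n : ℕ} {b : Fin (n + 1) → C} (hb : IsFreeCantorOn hC b) :
    IsFreeCantorOn hC (splitHead hC b) := by
  intro X hX x
  refine (existsUnique_congr fun f => and_congr_right fun hf => ?_).mp
    (hb X hX (Fin.cons (hX.mu (x 0, x 1)) (Fin.tail (Fin.tail x))))
  simp only [Fin.forall_fin_succ, _root_.splitHead, Fin.cons_zero, Fin.cons_succ, Fin.tail,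
    hf.apply_eq_mu (b 0), hX.mu.injective.eq_iff, Prod.mk.injEq, and_assoc]
  rfl

theorem IsFreeCantorOn.exists_of_le {n : ℕ} {b : Fin n → C} (hb : IsFreeCantorOn hC b)
    (hn : 1 ≤ n) {m : ℕ} (hm : n ≤ m) : ∃ b' : Fin m → C, IsFreeCantorOn hC b' := by
  induction m, hm using Nat.le_induction with
  | base => exact ⟨b, hb⟩
  | succ m hnm ih =>
    obtain ⟨k, rfl⟩ := Nat.exists_eq_add_of_le' (hn.trans hnm)
    obtain ⟨b', hb'⟩ := ih
    exact ⟨_, hb'.splitHead⟩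

end Free

/-- **All Thompson groups `V_r` are isomorphic**: the automorphism groups of free Cantor
algebras of positive ranks are isomorphic as groups. -/
theorem thompson_groups_iso {C D : Type} (hC : CantorStr C) (hD : CantorStr D) {r s : ℕ}
    (hr : 1 ≤ r) (hs : 1 ≤ s) (b : Fin r → C) (hb : IsFreeCantorOn hC b)
    (b' : Fin s → D) (hb' : IsFreeCantorOn hD b') :
    Nonempty (↥(cantorAut hC) ≃* ↥(cantorAut hD)) := by
  obtain ⟨c, hc⟩ := hb.exists_of_le hr (le_max_left r s)
  obtain ⟨d, hd⟩ := hb'.exists_of_le hs (le_max_right r s)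
  obtain ⟨e, he⟩ := hc.exists_cantorEquiv hd
  exact ⟨he.cantorAutCongr⟩
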